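/- arXiv:2101.08038 — 2 statements merged into one kernel-verified Lean document; each statement's English description precedes it below -/
import Mathlib

section
/- (Theorem, part 2) Let p be an odd prime, let e be the multiplicative order of any root of f(X) = X^p - X - 1 in an algebraic closure of 𝔽_p, and let ℓ be an odd prime dividing e. If ℓ divides (p^p - 1)/e, then ℓ is a Wieferich prime in base p; that is, p^(ℓ-1) ≡ 1 (mod ℓ²). -/
/-!
Iterating Frobenius on a root `α` of `X^p - X - 1` gives `α^(p^k) = α + k`, so `α^(p^p) = α`
and `e ∣ p^p - 1`. If `ℓ` divides both `e` and `(p^p - 1)/e`, then `ℓ² ∣ p^p - 1`. The order of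
`p` modulo `ℓ²` then divides both `p` and `φ(ℓ²) = ℓ(ℓ - 1)`; since `p ≠ ℓ`, it divides `ℓ - 1`.
-/

section ArtinSchreier

variable {R : Type*} [CommRing R] {p : ℕ} [Fact p.Prime] [CharP R p]

theorem pow_char_pow_eq_add_of_pow_char_eq_add_one {α : R} (hα : α ^ p = α + 1) (k : ℕ) :
    α ^ p ^ k = α + k := by
  induction k with
  | zero => simp
  | succ k ih =>
    rw [pow_succ, pow_mul, ih, add_pow_char, hα, ← frobenius_def, map_natCast]
    push_cast
    ring

theorem pow_char_pow_char_eq_self_of_pow_char_eq_add_one {α : R} (hα : α ^ p = α + 1) :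
    α ^ p ^ p = α := by
  simp [pow_char_pow_eq_add_of_pow_char_eq_add_one hα p]

end ArtinSchreier

theorem orderOf_dvd_sub_one_of_pow_eq_self {G₀ : Type*} [GroupWithZero G₀] {x : G₀} (hx : x ≠ 0)
    {n : ℕ} (hn : 1 ≤ n) (h : x ^ n = x) : orderOf x ∣ n - 1 := by
  rw [orderOf_dvd_iff_pow_eq_one, pow_sub₀ x hx hn, pow_one, h, mul_inv_cancel₀ hx]

theorem ZMod.pow_sub_one_eq_one_of_pow_eq_one {ℓ k : ℕ} (hℓ : ℓ.Prime) (hk : k.Coprime ℓ)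
    {x : ZMod (ℓ ^ 2)} (hx : x ^ k = 1) : x ^ (ℓ - 1) = 1 := by
  have hk0 : k ≠ 0 := by
    rintro rfl
    exact hℓ.one_lt.ne' (Nat.coprime_zero_left ℓ |>.mp hk)
  have htotient : x ^ (ℓ * (ℓ - 1)) = 1 := by
    have := congrArg Units.val (ZMod.pow_totient (IsUnit.of_pow_eq_one hx hk0).unit)
    simpa [Nat.totient_prime_pow hℓ two_pos] using this
  -- `k` is prime to the factor `ℓ` of `φ(ℓ²) = ℓ (ℓ - 1)`
  have hgcd : x ^ k.gcd (ℓ - 1) = 1 := by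
    rw [← Nat.Coprime.gcd_mul_left_cancel_right (ℓ - 1) hk.symm]
    exact pow_gcd_eq_one.mpr ⟨hx, htotient⟩
  obtain ⟨c, hc⟩ := Nat.gcd_dvd_right k (ℓ - 1)
  rw [hc, pow_mul, hgcd, one_pow]

theorem Nat.pow_sub_one_modEq_one_of_pow_modEq_one {ℓ a k : ℕ} (hℓ : ℓ.Prime)
    (hk : k.Coprime ℓ) (h : a ^ k ≡ 1 [MOD ℓ ^ 2]) : a ^ (ℓ - 1) ≡ 1 [MOD ℓ ^ 2] := by
  rw [← ZMod.natCast_eq_natCast_iff] at h ⊢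
  push_cast at h ⊢
  exact ZMod.pow_sub_one_eq_one_of_pow_eq_one hℓ hk h

theorem wieferich_obstruction_general
    (p : ℕ) [Fact p.Prime]
    (α : AlgebraicClosure (ZMod p)) (hα : α ^ p - α - 1 = 0)
    (e : ℕ) (he : e = orderOf α)
    (ℓ : ℕ) (hℓ : ℓ.Prime) (hdvd : ℓ ∣ e)
    (hd : ℓ ∣ (p ^ p - 1) / e) :
    p ^ (ℓ - 1) ≡ 1 [MOD ℓ ^ 2] := by
  have hp : p.Prime := Fact.out
  have hαp : α ^ p = α + 1 := by linear_combination hα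
  have hα0 : α ≠ 0 := by
    rintro rfl
    simp [zero_pow hp.ne_zero] at hαp
  have hpp : 1 ≤ p ^ p := Nat.one_le_pow _ _ hp.pos
  have he_dvd : e ∣ p ^ p - 1 := he ▸ orderOf_dvd_sub_one_of_pow_eq_self hα0 hpp
    (pow_char_pow_char_eq_self_of_pow_char_eq_add_one hαp)
  have hsq : ℓ ^ 2 ∣ p ^ p - 1 :=
    sq ℓ ▸ (mul_dvd_mul_right hdvd ℓ).trans (Nat.mul_dvd_of_dvd_div he_dvd hd)
  have hmod : p ^ p ≡ 1 [MOD ℓ ^ 2] := ((Nat.modEq_iff_dvd' hpp).mpr hsq).symm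
  have hcop : p.Coprime ℓ := by
    have := hmod.gcd_eq
    rw [Nat.gcd_one_left, ← Nat.Coprime, Nat.coprime_pow_left_iff hp.pos,
      Nat.coprime_pow_right_iff two_pos] at this
    exact this
  exact Nat.pow_sub_one_modEq_one_of_pow_modEq_one hℓ hcop hmod

/-- Theorem, part 2: with `e` the multiplicative order of a root of `X^p - X - 1` over `𝔽_p`
and `ℓ` an odd prime dividing `e`, if `ℓ ∣ (p^p - 1)/e` then `ℓ` is a Wieferich prime in
base `p`, i.e., `p^(ℓ-1) ≡ 1 (mod ℓ²)`. -/
theorem wieferich_obstruction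
    (p : ℕ) [Fact p.Prime] (hpodd : Odd p)
    (α : AlgebraicClosure (ZMod p)) (hα : α ^ p - α - 1 = 0)
    (e : ℕ) (he : e = orderOf α)
    (ℓ : ℕ) (hℓ : ℓ.Prime) (hℓodd : Odd ℓ) (hdvd : ℓ ∣ e)
    (hd : ℓ ∣ (p ^ p - 1) / e) :
    p ^ (ℓ - 1) ≡ 1 [MOD ℓ ^ 2] :=
  wieferich_obstruction_general p α hα e he ℓ hℓ hdvd hd
end

section
/- Let p be an odd prime, let e be the multiplicative order of any root of f(X) = X^p - X - 1 in an algebraic closure of 𝔽_p, and let ℓ be an odd prime dividing e such that ℓ does not divide (p^p - 1)/e. Then for every integer m ≥ 0, the polynomial f(X^(ℓ^m)) = X^(pℓ^m) - X^(ℓ^m) - 1 is irreducible over 𝔽_p. -/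
/-!
A root `α` of `f = X ^ p - X - 1` satisfies `α ^ p ^ d = α + d`, so its degree `d` over `𝔽_p` is a
multiple of `p`: `f` is irreducible (Artin–Schreier). By Capelli's criterion
(`Polynomial.irreducible_comp`) it then suffices that `X ^ ℓ ^ m - α` is irreducible over
`𝔽_p(α) ≅ 𝔽_{p ^ p}` for each root `α`, and since `ℓ` is odd this holds as soon as `α` is not an
`ℓ`-th power there. All roots share the order `e`, and an `ℓ`-th root `b` of `α` would have order
`ℓ * e` dividing `p ^ p - 1`, i.e. `ℓ ∣ (p ^ p - 1) / e`.
-/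

open Polynomial IntermediateField

theorem pow_char_pow_eq_add_natCast {R : Type*} [CommRing R] {p : ℕ} [Fact p.Prime] [CharP R p]
    {x : R} (hx : x ^ p = x + 1) (n : ℕ) : x ^ p ^ n = x + n := by
  induction n with
  | zero => simp
  | succ n ih =>
    have hn : (n : R) ^ p = n := by
      rw [← frobenius_def, map_natCast]
    rw [pow_succ, pow_mul, ih, add_pow_char, hx, hn]
    push_cast
    ring

theorem pow_card_pow_natDegree_minpoly {K E : Type*} [Field K] [Finite K] [Field E] [Algebra K E]
    {x : E} (hx : IsIntegral K x) : x ^ Nat.card K ^ (minpoly K x).natDegree = x := by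
  have hdvd := (minpoly.irreducible hx).natDegree_dvd_iff_dvd_X_pow_card_pow_sub_X.1 dvd_rfl
  simpa [sub_eq_zero] using aeval_eq_zero_of_dvd_aeval_eq_zero hdvd (minpoly.aeval K x)

theorem minpoly_eq_of_natDegree_le {F E : Type*} [Field F] [Field E] [Algebra F E] {f : F[X]}
    (hf : f.Monic) {x : E} (hx : aeval x f = 0)
    (hdeg : f.natDegree ≤ (minpoly F x).natDegree) : minpoly F x = f :=
  (eq_of_monic_of_dvd_of_natDegree_le (minpoly.monic ⟨f, hf, hx⟩) hf (minpoly.dvd F x hx) hdeg).symm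

theorem natDegree_X_pow_sub_X_sub_one {R : Type*} [CommRing R] [Nontrivial R] {n : ℕ}
    (hn : 1 < n) : (X ^ n - X - 1 : R[X]).natDegree = n := by
  rw [sub_sub, natDegree_sub_eq_left_of_natDegree_lt] <;>
    simp [natDegree_X_pow, (natDegree_add_le _ _).trans_lt, hn]

theorem monic_X_pow_sub_X_sub_one {R : Type*} [CommRing R] {n : ℕ} (hn : 1 < n) :
    (X ^ n - X - 1 : R[X]).Monic := by
  rw [sub_sub]
  refine monic_X_pow_sub ((degree_add_le _ _).trans_lt (max_lt ?_ ?_))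
  · exact degree_X_le.trans_lt (by exact_mod_cast hn)
  · exact degree_one_le.trans_lt (by exact_mod_cast zero_lt_one.trans hn)

theorem irreducible_X_pow_sub_X_sub_one (p : ℕ) [Fact p.Prime] :
    Irreducible (X ^ p - X - 1 : (ZMod p)[X]) := by
  have hp := (Fact.out : p.Prime).one_lt
  obtain ⟨α, hα⟩ := IsAlgClosed.exists_aeval_eq_zero (AlgebraicClosure (ZMod p))
    (X ^ p - X - 1 : (ZMod p)[X]) (by
      rw [degree_eq_natDegree (monic_X_pow_sub_X_sub_one hp).ne_zero,
        natDegree_X_pow_sub_X_sub_one hp]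
      exact_mod_cast (Fact.out : p.Prime).ne_zero)
  have hαint : IsIntegral (ZMod p) α := ⟨_, monic_X_pow_sub_X_sub_one hp, hα⟩
  have hαp : α ^ p = α + 1 := by simpa [sub_eq_zero, sub_sub] using hα
  -- `α ^ p ^ d = α + d`, but also `α ^ p ^ d = α` as `α` generates a field with `p ^ d` elements
  have hd : ((minpoly (ZMod p) α).natDegree : AlgebraicClosure (ZMod p)) = 0 := by
    simpa [Nat.card_zmod, pow_char_pow_eq_add_natCast hαp] using
      pow_card_pow_natDegree_minpoly hαint
  have hpd := (CharP.cast_eq_zero_iff _ p _).1 hd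
  rw [← minpoly_eq_of_natDegree_le (monic_X_pow_sub_X_sub_one hp) hα
    ((natDegree_X_pow_sub_X_sub_one hp).trans_le (Nat.le_of_dvd (minpoly.natDegree_pos hαint) hpd))]
  exact minpoly.irreducible hαint

theorem dvd_div_orderOf_pow_of_pow_eq_one {G : Type*} [Monoid G] {b : G} {ℓ N : ℕ}
    (hℓ : ℓ.Prime) (hb : b ^ N = 1) (hℓb : ℓ ∣ orderOf (b ^ ℓ)) : ℓ ∣ N / orderOf (b ^ ℓ) := by
  obtain ⟨k, rfl⟩ := orderOf_dvd_of_pow_eq_one hb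
  have hpow := orderOf_pow' b hℓ.ne_zero
  rcases Nat.eq_zero_or_pos (orderOf b) with h0 | hpos
  · simp [hpow, h0]
  obtain ⟨c, hc⟩ : ℓ ∣ orderOf b :=
    hℓb.trans (hpow ▸ Nat.div_dvd_of_dvd (Nat.gcd_dvd_left _ _))
  have hc0 : 0 < c := Nat.pos_of_mul_pos_left (hc ▸ hpos)
  rw [hpow, Nat.gcd_eq_right ⟨c, hc⟩, hc, Nat.mul_div_cancel_left _ hℓ.pos, mul_comm ℓ c,
    mul_assoc, Nat.mul_div_cancel_left _ hc0]
  exact dvd_mul_right ℓ k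

theorem FiniteField.pow_prime_ne_of_not_dvd {K : Type*} [Field K] [Fintype K] {a : K} {ℓ : ℕ}
    (hℓ : ℓ.Prime) (hℓa : ℓ ∣ orderOf a) (hnd : ¬ ℓ ∣ (Fintype.card K - 1) / orderOf a) (b : K) :
    b ^ ℓ ≠ a := by
  rintro rfl
  rcases eq_or_ne b 0 with rfl | hb
  · -- `orderOf 0 = 0` and `_ / 0 = 0`, so `hnd` says `¬ ℓ ∣ 0`
    simp [zero_pow hℓ.ne_zero] at hnd
  · exact hnd (dvd_div_orderOf_pow_of_pow_eq_one hℓ (FiniteField.pow_card_sub_one_eq_one b hb) hℓa)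

theorem orderOf_eq_of_minpoly_eq {K A B : Type*} [Field K] [Ring A] [Algebra K A] [Ring B]
    [Algebra K B] {x : A} {y : B} (h : minpoly K x = minpoly K y) : orderOf x = orderOf y :=
  orderOf_eq_orderOf_iff.2 fun n ↦ by
    have hx : x ^ n = 1 ↔ minpoly K x ∣ X ^ n - 1 := by simp [minpoly.dvd_iff, sub_eq_zero]
    have hy : y ^ n = 1 ↔ minpoly K y ∣ X ^ n - 1 := by simp [minpoly.dvd_iff, sub_eq_zero]
    rw [hx, hy, h]

theorem FiniteField.irreducible_X_pow_sub_C_gen {K E : Type*} [Field K] [Finite K] [Field E]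
    [Algebra K E] {x : E} (hx : IsIntegral K x) {ℓ : ℕ} (hℓ : ℓ.Prime) (hℓ2 : ℓ ≠ 2)
    (hℓx : ℓ ∣ orderOf x) (hnd : ¬ ℓ ∣ (Nat.card K ^ (minpoly K x).natDegree - 1) / orderOf x)
    (m : ℕ) : Irreducible (X ^ ℓ ^ m - C (AdjoinSimple.gen K x)) := by
  have : FiniteDimensional K K⟮x⟯ := adjoin.finiteDimensional hx
  have : Finite K⟮x⟯ := Module.finite_of_finite K
  let := Fintype.ofFinite K⟮x⟯
  have horder : orderOf (AdjoinSimple.gen K x) = orderOf x := by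
    simpa using (orderOf_injective (algebraMap K⟮x⟯ E).toMonoidHom (algebraMap K⟮x⟯ E).injective
      (AdjoinSimple.gen K x)).symm
  have hcard : Fintype.card K⟮x⟯ = Nat.card K ^ (minpoly K x).natDegree := by
    rw [Fintype.card_eq_nat_card, Module.natCard_eq_pow_finrank (K := K), adjoin.finrank hx]
  exact X_pow_sub_C_irreducible_of_prime_pow hℓ hℓ2 m
    (FiniteField.pow_prime_ne_of_not_dvd hℓ (horder ▸ hℓx) (by rwa [horder, hcard]))

theorem f_comp_pow_irreducible_general
    (p : ℕ) [Fact p.Prime]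
    (α : AlgebraicClosure (ZMod p)) (hα : α ^ p - α - 1 = 0)
    (e : ℕ) (he : e = orderOf α)
    (ℓ : ℕ) (hℓ : ℓ.Prime) (hℓodd : Odd ℓ) (hdvd : ℓ ∣ e)
    (hnd : ¬ ℓ ∣ (p ^ p - 1) / e) (m : ℕ) :
    Irreducible (X ^ (p * ℓ ^ m) - X ^ ℓ ^ m - 1 : (ZMod p)[X]) := by
  have hp := (Fact.out : p.Prime).one_lt
  have hf := irreducible_X_pow_sub_X_sub_one p
  have hfm : (X ^ p - X - 1 : (ZMod p)[X]).Monic := monic_X_pow_sub_X_sub_one hp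
  have hminα : minpoly (ZMod p) α = X ^ p - X - 1 :=
    (minpoly.eq_of_irreducible_of_monic hf (by simpa using hα) hfm).symm
  have hcomp := irreducible_comp hfm (monic_X_pow (ℓ ^ m)) hf fun E _ _ x hx ↦ by
    have hxint : IsIntegral (ZMod p) x := ⟨_, hfm, hx ▸ minpoly.aeval _ x⟩
    have horder : orderOf x = e := he ▸ orderOf_eq_of_minpoly_eq (hx.trans hminα.symm)
    rw [Polynomial.map_pow, map_X]
    refine FiniteField.irreducible_X_pow_sub_C_gen hxint hℓ (hℓodd.ne_two_of_dvd_nat dvd_rfl)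
      (horder ▸ hdvd) ?_ m
    rwa [Nat.card_zmod, hx, natDegree_X_pow_sub_X_sub_one hp, horder]
  simpa [sub_comp, ← pow_mul, mul_comm] using hcomp

/-- With `e` the multiplicative order of a root of `X^p - X - 1` over `𝔽_p` and `ℓ` an odd
prime dividing `e` but not `(p^p - 1)/e`, the polynomial `X^(pℓ^m) - X^(ℓ^m) - 1` is
irreducible over `𝔽_p` for every `m ≥ 0`. -/
theorem f_comp_pow_irreducible
    (p : ℕ) [Fact p.Prime] (hpodd : Odd p)
    (α : AlgebraicClosure (ZMod p)) (hα : α ^ p - α - 1 = 0)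
    (e : ℕ) (he : e = orderOf α)
    (ℓ : ℕ) (hℓ : ℓ.Prime) (hℓodd : Odd ℓ) (hdvd : ℓ ∣ e)
    (hnd : ¬ ℓ ∣ (p ^ p - 1) / e) (m : ℕ) :
    Irreducible (X ^ (p * ℓ ^ m) - X ^ ℓ ^ m - 1 : (ZMod p)[X]) :=
  f_comp_pow_irreducible_general p α hα e he ℓ hℓ hℓodd hdvd hnd m
end
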